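/- arXiv:1611.05381 — 7 statements merged into one kernel-verified Lean document; each statement's English description precedes it below -/
import Mathlib

section
/- Let u be a solution of the Schrödinger evolution on a web-like graph. Set 𝓕 = F ∪ {ν_j(1) : 1 ≤ j ≤ N}, regarded as a graph with an edge (α,β) iff α ≠ β and L(α,β) ≠ 0. Let B ⊆ 𝓕 and put B′ = B ∖ {ν_j(1) : ν_j(1) ∈ B and ν_j(0) ∉ B}. If [B′] = 𝓕 and u(t,β) = 0 for all β ∈ B′ and all t ∈ [0,1], then u(t,α) = 0 for all α ∈ A and all t ∈ [0,1]. -/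
/-!
A vertex `β` at which `u` vanishes for all times has `(L u)(β) = -i ∂ₜ u(β) = 0`; so if all
neighbours of `β` but one, `α`, are known to vanish, the remaining term `L(β, α) u(α)` forces
`u(α) = 0`. This justifies every one-step extension, except that a vertex of `𝓕` may also have
the neighbour `ν_j(2) ∉ 𝓕`, namely when it is `ν_j(1)`. Passing from `B` to `B'` ensures, and
every extension preserves, that `ν_j(1)` only lies in the set together with `ν_j(0)`; vanishing
at `ν_j(0)` and `ν_j(1)` then propagates down channel `j` by the three-term recursion.
-/

open Set

def OneStepExt {V : Type*} (G : Set V) (adj : V → V → Prop) (B B' : Set V) : Prop :=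
  ∃ α ∈ G \ B, ∃ β ∈ B, adj β α ∧ (∀ γ ∈ G \ B, adj β γ → γ = α) ∧ B' = insert α B

section UniqueNeighbor

variable {ι : Type*}

def IsUniqueNeighborClosed (L : ι → ι → ℝ) (Z : Set ι) : Prop :=
  ∀ β ∈ Z, ∀ α, L β α ≠ 0 → (∀ b, b ≠ α → L β b ≠ 0 → b ∈ Z) → α ∈ Z

theorem lp_apply_eq_zero_of_hasDerivWithinAt {E : ι → Type*} [∀ i, NormedAddCommGroup (E i)]
    [∀ i, NormedSpace ℝ (E i)] {p : ENNReal} [Fact (1 ≤ p)] {s : Set ℝ} (hs : UniqueDiffOn ℝ s)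
    {u w : ℝ → lp E p} (hderiv : ∀ t ∈ s, HasDerivWithinAt u (w t) s t) {i : ι}
    (hi : ∀ t ∈ s, u t i = 0) {t : ℝ} (ht : t ∈ s) : w t i = 0 :=
  (hs t ht).eq_deriv s
    ((lp.evalCLM ℝ E p i).hasFDerivAt.comp_hasDerivWithinAt t (hderiv t ht))
    ((hasDerivWithinAt_const t s 0).congr hi (hi t ht))

theorem isUniqueNeighborClosed_vanishing {p : ENNReal} [Fact (1 ≤ p)] {s : Set ℝ}
    (hs : UniqueDiffOn ℝ s) (L : ι → ι → ℝ) {u w : ℝ → lp (fun _ : ι => ℂ) p}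
    (hw : ∀ t ∈ s, ∀ a, w t a = Complex.I * ∑' b, (L a b : ℂ) * u t b)
    (hderiv : ∀ t ∈ s, HasDerivWithinAt u (w t) s t) :
    IsUniqueNeighborClosed L {i | ∀ t ∈ s, u t i = 0} := by
  intro β hβ α hLα hnbr t ht
  have hLu : ∑' b, (L β b : ℂ) * u t b = 0 := by
    have hwβ := lp_apply_eq_zero_of_hasDerivWithinAt hs hderiv hβ ht
    rwa [hw t ht β, mul_eq_zero, or_iff_right Complex.I_ne_zero] at hwβ
  rw [tsum_eq_single α fun b hb => ?_] at hLu
  · exact (mul_eq_zero.mp hLu).resolve_left (by exact_mod_cast hLα)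
  · by_cases hLb : L β b = 0
    · simp [hLb]
    · simp [hnbr b hb hLb t ht]

end UniqueNeighbor

section WebLike

variable {F : Type*} {N : ℕ}

/-- The set `𝓕 = F ∪ {ν_j(1) : j}` of the paper. -/
def innerCore (ν : Fin N → ℕ → F ⊕ (Fin N × ℕ)) : Set (F ⊕ (Fin N × ℕ)) :=
  range Sum.inl ∪ range fun j => ν j 1

def ChannelClosed (ν : Fin N → ℕ → F ⊕ (Fin N × ℕ)) (S : Set (F ⊕ (Fin N × ℕ))) : Prop :=
  ∀ j, ν j 1 ∈ S → ν j 0 ∈ S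

structure IsWebLike (endpt : Fin N → F) (ν : Fin N → ℕ → F ⊕ (Fin N × ℕ))
    (L : F ⊕ (Fin N × ℕ) → F ⊕ (Fin N × ℕ) → ℝ) : Prop where
  ν_zero : ∀ j, ν j 0 = Sum.inl (endpt j)
  ν_succ : ∀ j k, ν j (k + 1) = Sum.inr (j, k)
  symm : ∀ a b, L a b = L b a
  channel_far : ∀ j k n, 1 < Nat.dist k n → L (ν j k) (ν j n) = 0
  channel_adj : ∀ j k, L (ν j k) (ν j (k + 1)) ≠ 0
  channel_cross : ∀ j j' k n, j ≠ j' → 1 ≤ k → 1 ≤ n → L (ν j k) (ν j' n) = 0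
  inner : ∀ (α : F) j k, 1 ≤ k → ¬(k = 1 ∧ α = endpt j) → L (Sum.inl α) (ν j k) = 0

namespace IsWebLike

variable {endpt : Fin N → F} {ν : Fin N → ℕ → F ⊕ (Fin N × ℕ)}
  {L : F ⊕ (Fin N × ℕ) → F ⊕ (Fin N × ℕ) → ℝ} {Z : Set (F ⊕ (Fin N × ℕ))}

theorem neighbor_ν_succ (hL : IsWebLike endpt ν L) {j : Fin N} {k : ℕ} {b : F ⊕ (Fin N × ℕ)}
    (h : L (ν j (k + 1)) b ≠ 0) : b = ν j k ∨ b = ν j (k + 1) ∨ b = ν j (k + 2) := by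
  rcases b with f | ⟨j', n⟩
  · by_cases hc : k + 1 = 1 ∧ f = endpt j
    · obtain ⟨hk, rfl⟩ := hc
      left
      rw [show k = 0 by omega, hL.ν_zero]
    · exact (h (by rw [hL.symm]; exact hL.inner f j (k + 1) (by omega) hc)).elim
  · rw [← hL.ν_succ] at h ⊢
    obtain rfl : j' = j := by
      by_contra hj
      exact h (hL.channel_cross j j' (k + 1) (n + 1) (Ne.symm hj) (by omega) (by omega))
    have hdist : ¬ 1 < Nat.dist (k + 1) (n + 1) := fun hd => h (hL.channel_far _ _ _ hd)
    have hn : n + 1 = k ∨ n + 1 = k + 1 ∨ n + 1 = k + 2 := by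
      simp only [Nat.dist] at hdist; omega
    rcases hn with hn | hn | hn <;> simp [hn]

theorem neighbor_of_mem_innerCore (hL : IsWebLike endpt ν L) {β b : F ⊕ (Fin N × ℕ)}
    (hβ : β ∈ innerCore ν) (h : L β b ≠ 0) :
    b ∈ innerCore ν ∨ ∃ j, β = ν j 1 ∧ b = ν j 2 := by
  rcases hβ with ⟨f, rfl⟩ | ⟨j, rfl⟩
  · left
    rcases b with f' | ⟨j, n⟩
    · exact Or.inl ⟨f', rfl⟩
    · rw [← hL.ν_succ] at h ⊢
      obtain rfl : n = 0 := by
        by_contra hn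
        exact h (hL.inner f j (n + 1) (by omega) (by omega))
      exact Or.inr ⟨j, rfl⟩
  · rcases hL.neighbor_ν_succ (k := 0) h with rfl | rfl | rfl
    · exact Or.inl (Or.inl ⟨endpt j, (hL.ν_zero j).symm⟩)
    · exact Or.inl (Or.inr ⟨j, rfl⟩)
    · exact Or.inr ⟨j, rfl, rfl⟩

theorem ν_two_notMem_innerCore (hL : IsWebLike endpt ν L) (j : Fin N) :
    ν j 2 ∉ innerCore ν := by
  rintro (⟨f, hf⟩ | ⟨j', hj'⟩)
  · rw [hL.ν_succ] at hf
    exact Sum.inl_ne_inr hf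
  · dsimp only at hj'
    rw [hL.ν_succ, hL.ν_succ] at hj'
    simp at hj'

theorem eq_ν_zero_of_adj_ν_one (hL : IsWebLike endpt ν L) {b : F ⊕ (Fin N × ℕ)} {j : Fin N}
    (hb : b ∈ innerCore ν) (hne : b ≠ ν j 1) (h : L b (ν j 1) ≠ 0) : b = ν j 0 := by
  rw [hL.symm] at h
  rcases hL.neighbor_ν_succ (k := 0) h with hb0 | hb1 | hb2
  · exact hb0
  · exact absurd hb1 hne
  · exact absurd (hb2 ▸ hb) (hL.ν_two_notMem_innerCore j)

theorem channelClosed_diff (hL : IsWebLike endpt ν L) (B : Set (F ⊕ (Fin N × ℕ))) :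
    ChannelClosed ν (B \ {x | ∃ j, x = ν j 1 ∧ ν j 1 ∈ B ∧ ν j 0 ∉ B}) := by
  rintro j ⟨hB, hnot⟩
  refine ⟨by_contra fun h0 => hnot ⟨j, rfl, hB, h0⟩, ?_⟩
  rintro ⟨j', h, -⟩
  rw [hL.ν_zero, hL.ν_succ] at h
  exact Sum.inl_ne_inr h

theorem channel_subset (hL : IsWebLike endpt ν L) (hZ : IsUniqueNeighborClosed L Z) {j : Fin N}
    (h0 : ν j 0 ∈ Z) (h1 : ν j 1 ∈ Z) (k : ℕ) : ν j k ∈ Z := by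
  induction k using Nat.twoStepInduction with
  | zero => exact h0
  | one => exact h1
  | more k hk hk1 =>
    refine hZ _ hk1 _ (hL.channel_adj j (k + 1)) fun b hb hLb => ?_
    rcases hL.neighbor_ν_succ hLb with rfl | rfl | rfl
    exacts [hk, hk1, absurd rfl hb]

theorem oneStepExt_preserves (hL : IsWebLike endpt ν L) (hZ : IsUniqueNeighborClosed L Z)
    {S S' : Set (F ⊕ (Fin N × ℕ))}
    (hext : OneStepExt (innerCore ν) (fun a b => a ≠ b ∧ L a b ≠ 0) S S')
    (hS : S ⊆ innerCore ν) (hSc : ChannelClosed ν S) (hSZ : S ⊆ Z) :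
    S' ⊆ innerCore ν ∧ ChannelClosed ν S' ∧ S' ⊆ Z := by
  obtain ⟨α, ⟨hαF, hαS⟩, β, hβS, ⟨hβα, hLβα⟩, huniq, rfl⟩ := hext
  have hnbr : ∀ b, b ≠ α → L β b ≠ 0 → b ∈ Z := by
    intro b hbα hLb
    rcases hL.neighbor_of_mem_innerCore (hS hβS) hLb with hbF | ⟨j, rfl, rfl⟩
    · have hbS : b ∈ S := by
        by_contra hbS
        exact hbα (huniq b ⟨hbF, hbS⟩ ⟨fun h => hbS (h ▸ hβS), hLb⟩)
      exact hSZ hbS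
    · exact hL.channel_subset hZ (hSZ (hSc j hβS)) (hSZ hβS) 2
  refine ⟨insert_subset hαF hS, ?_, insert_subset (hZ β (hSZ hβS) α hLβα hnbr) hSZ⟩
  rintro j (rfl | hj)
  · rw [← hL.eq_ν_zero_of_adj_ν_one (hS hβS) hβα hLβα]
    exact mem_insert_of_mem _ hβS
  · exact mem_insert_of_mem _ (hSc j hj)

theorem mem_of_reflTransGen (hL : IsWebLike endpt ν L) (hZ : IsUniqueNeighborClosed L Z)
    {B : Set (F ⊕ (Fin N × ℕ))}
    (hchain : Relation.ReflTransGen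
      (OneStepExt (innerCore ν) (fun a b => a ≠ b ∧ L a b ≠ 0)) B (innerCore ν))
    (hB : B ⊆ innerCore ν) (hBc : ChannelClosed ν B) (hBZ : B ⊆ Z) (a : F ⊕ (Fin N × ℕ)) :
    a ∈ Z := by
  have hcore : innerCore ν ⊆ Z := by
    suffices ∀ S, Relation.ReflTransGen
        (OneStepExt (innerCore ν) (fun a b => a ≠ b ∧ L a b ≠ 0)) B S →
        S ⊆ innerCore ν ∧ ChannelClosed ν S ∧ S ⊆ Z from (this _ hchain).2.2
    intro S hS
    induction hS with
    | refl => exact ⟨hB, hBc, hBZ⟩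
    | tail _ hstep ih => exact hL.oneStepExt_preserves hZ hstep ih.1 ih.2.1 ih.2.2
  rcases a with f | ⟨j, k⟩
  · exact hcore (Or.inl ⟨f, rfl⟩)
  · rw [← hL.ν_succ]
    exact hL.channel_subset hZ (hcore (Or.inl ⟨endpt j, (hL.ν_zero j).symm⟩))
      (hcore (Or.inr ⟨j, rfl⟩)) _

end IsWebLike

end WebLike

theorem stmt_1_general
    {F : Type*} {N : ℕ}
    (endpt : Fin N → F)
    (ν : Fin N → ℕ → (F ⊕ (Fin N × ℕ)))
    (hν0 : ∀ j, ν j 0 = Sum.inl (endpt j))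
    (hνS : ∀ j k, ν j (k + 1) = Sum.inr (j, k))
    (L : (F ⊕ (Fin N × ℕ)) → (F ⊕ (Fin N × ℕ)) → ℝ)
    (hsymm : ∀ a b, L a b = L b a)
    (hchan0 : ∀ j k n, 1 < Nat.dist k n → L (ν j k) (ν j n) = 0)
    (hchan1 : ∀ j k, L (ν j k) (ν j (k + 1)) ≠ 0)
    (hchan2 : ∀ j j' k n, j ≠ j' → 1 ≤ k → 1 ≤ n → L (ν j k) (ν j' n) = 0)
    (hinner : ∀ (α : F) j k, 1 ≤ k → ¬(k = 1 ∧ α = endpt j) →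
      L (Sum.inl α) (ν j k) = 0)
    (u w : ℝ → lp (fun _ : F ⊕ (Fin N × ℕ) => ℂ) 2)
    (hw : ∀ t ∈ Icc (0:ℝ) 1, ∀ a, w t a = Complex.I * ∑' b, (L a b : ℂ) * u t b)
    (hderiv : ∀ t ∈ Icc (0:ℝ) 1, HasDerivWithinAt u (w t) (Icc (0:ℝ) 1) t)
    (B B' : Set (F ⊕ (Fin N × ℕ)))
    (hB : B ⊆ Set.range (Sum.inl : F → F ⊕ (Fin N × ℕ)) ∪ Set.range fun j => ν j 1)
    (hB' : B' = B \ {x | ∃ j, x = ν j 1 ∧ ν j 1 ∈ B ∧ ν j 0 ∉ B})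
    (hext : Relation.ReflTransGen
      (OneStepExt (Set.range (Sum.inl : F → F ⊕ (Fin N × ℕ)) ∪ Set.range fun j => ν j 1)
        (fun a b => a ≠ b ∧ L a b ≠ 0))
      B' (Set.range (Sum.inl : F → F ⊕ (Fin N × ℕ)) ∪ Set.range fun j => ν j 1))
    (hvanish : ∀ β ∈ B', ∀ t ∈ Icc (0:ℝ) 1, u t β = 0) :
    ∀ t ∈ Icc (0:ℝ) 1, ∀ a, u t a = 0 := by
  have hL : IsWebLike endpt ν L := ⟨hν0, hνS, hsymm, hchan0, hchan1, hchan2, hinner⟩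
  have hZ := isUniqueNeighborClosed_vanishing (uniqueDiffOn_Icc one_pos) L hw hderiv
  have hB'B : B' ⊆ B := hB' ▸ sdiff_subset
  intro t ht a
  exact hL.mem_of_reflTransGen hZ hext (hB'B.trans hB) (hB' ▸ hL.channelClosed_diff B)
    hvanish a t ht

/-- uniqueness from an extendable zero set on the inner part of a
web-like graph (setup exactly as in Statement 0).

Put `𝓕 = F ∪ {ν_j(1) : j}`, with the graph structure `(α,β)` an edge iff `α ≠ β` and
`L(α,β) ≠ 0`.  For `B ⊆ 𝓕` put `B' = B ∖ {ν_j(1) : ν_j(1) ∈ B, ν_j(0) ∉ B}`.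
If `[B'] = 𝓕` (expressed as: some chain of one-step extensions inside `𝓕` leads from
`B'` to `𝓕`, which is automatically maximal) and `u` vanishes on `B'` for all
`t ∈ [0,1]`, then `u` vanishes identically on `A` for all `t ∈ [0,1]`. -/
theorem stmt_1
    {F : Type*} [Fintype F] {N : ℕ} (hN : 1 ≤ N)
    (endpt : Fin N → F)
    (ν : Fin N → ℕ → (F ⊕ (Fin N × ℕ)))
    (hν0 : ∀ j, ν j 0 = Sum.inl (endpt j))
    (hνS : ∀ j k, ν j (k + 1) = Sum.inr (j, k))
    (L : (F ⊕ (Fin N × ℕ)) → (F ⊕ (Fin N × ℕ)) → ℝ)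
    (hsymm : ∀ a b, L a b = L b a)
    (hpos : ∀ x : (F ⊕ (Fin N × ℕ)) →₀ ℝ,
      0 ≤ ∑ a ∈ x.support, ∑ b ∈ x.support, x a * L a b * x b)
    (hbdd : ∃ Cb : ℝ, ∀ x : (F ⊕ (Fin N × ℕ)) →₀ ℝ,
      |∑ a ∈ x.support, ∑ b ∈ x.support, x a * L a b * x b|
        ≤ Cb * ∑ a ∈ x.support, x a ^ 2)
    (hchan0 : ∀ j k n, 1 < Nat.dist k n → L (ν j k) (ν j n) = 0)
    (hchan1 : ∀ j k, L (ν j k) (ν j (k + 1)) ≠ 0)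
    (hchan2 : ∀ j j' k n, j ≠ j' → 1 ≤ k → 1 ≤ n → L (ν j k) (ν j' n) = 0)
    (hinner : ∀ (α : F) j k, 1 ≤ k → ¬(k = 1 ∧ α = endpt j) →
      L (Sum.inl α) (ν j k) = 0)
    (hfree : ∃ K₀ : ℕ, 0 < K₀ ∧ ∀ j k, K₀ ≤ k →
      L (ν j k) (ν j k) = 2 ∧ L (ν j k) (ν j (k + 1)) = -1)
    (u w : ℝ → lp (fun _ : F ⊕ (Fin N × ℕ) => ℂ) 2)
    (hw : ∀ t ∈ Icc (0:ℝ) 1, ∀ a, w t a = Complex.I * ∑' b, (L a b : ℂ) * u t b)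
    (hderiv : ∀ t ∈ Icc (0:ℝ) 1, HasDerivWithinAt u (w t) (Icc (0:ℝ) 1) t)
    (hwcont : ContinuousOn w (Icc (0:ℝ) 1))
    (B B' : Set (F ⊕ (Fin N × ℕ)))
    (hB : B ⊆ Set.range (Sum.inl : F → F ⊕ (Fin N × ℕ)) ∪ Set.range fun j => ν j 1)
    (hB' : B' = B \ {x | ∃ j, x = ν j 1 ∧ ν j 1 ∈ B ∧ ν j 0 ∉ B})
    (hext : Relation.ReflTransGen
      (OneStepExt (Set.range (Sum.inl : F → F ⊕ (Fin N × ℕ)) ∪ Set.range fun j => ν j 1)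
        (fun a b => a ≠ b ∧ L a b ≠ 0))
      B' (Set.range (Sum.inl : F → F ⊕ (Fin N × ℕ)) ∪ Set.range fun j => ν j 1))
    (hvanish : ∀ β ∈ B', ∀ t ∈ Icc (0:ℝ) 1, u t β = 0) :
    ∀ t ∈ Icc (0:ℝ) 1, ∀ a, u t a = 0 :=
  stmt_1_general endpt ν hν0 hνS L hsymm hchan0 hchan1 hchan2 hinner u w hw hderiv B B' hB hB' hext
    hvanish
end

section
/- Let G be a graph on a finite vertex set 𝓕 and let B ⊆ 𝓕. Then all maximal chains of one-step extensions beginning at B end with the same set: if B₁ and B₂ are both obtained from B by chains of one-step extensions and neither B₁ nor B₂ admits a one-step extension, then B₁ = B₂. -/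
private lemma key {V : Type*} (adj : V → V → Prop) {B C D : Set V}
    (h : Relation.ReflTransGen (OneStepExt Set.univ adj) B C)
    (hBD : B ⊆ D) (hmax : ∀ D', ¬ OneStepExt Set.univ adj D D') : C ⊆ D := by
  induction h with
  | refl => exact hBD
  | tail _ hstep ih =>
    obtain ⟨α, hα, β, hβ, hadj, huniq, rfl⟩ := hstep
    by_cases hαD : α ∈ D
    · exact Set.insert_subset hαD ih
    · exact absurd ⟨α, ⟨trivial, hαD⟩, β, ih hβ, hadj,
        fun γ hγ hadjγ => huniq γ ⟨trivial, fun hγC => hγ.2 (ih hγC)⟩ hadjγ, rfl⟩ (hmax _)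

private lemma mono {V : Type*} (adj : V → V → Prop) {B C : Set V}
    (h : Relation.ReflTransGen (OneStepExt Set.univ adj) B C) : B ⊆ C := by
  induction h with
  | refl => exact le_refl _
  | tail _ hstep ih =>
    obtain ⟨α, hα, β, hβ, hadj, huniq, rfl⟩ := hstep
    exact ih.trans (Set.subset_insert _ _)

/-- all maximal chains of one-step extensions beginning at `B`
end with the same set. -/
theorem stmt_3 {V : Type*} [Fintype V] (G : SimpleGraph V) (B B₁ B₂ : Set V)
    (h1 : Relation.ReflTransGen (OneStepExt Set.univ G.Adj) B B₁)
    (h2 : Relation.ReflTransGen (OneStepExt Set.univ G.Adj) B B₂)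
    (hmax1 : ∀ B', ¬ OneStepExt Set.univ G.Adj B₁ B')
    (hmax2 : ∀ B', ¬ OneStepExt Set.univ G.Adj B₂ B') :
    B₁ = B₂ := by
  apply Set.Subset.antisymm
  · exact key G.Adj h1 (mono G.Adj h2) hmax2
  · exact key G.Adj h2 (mono G.Adj h1) hmax1
end

section
/- Let L be a real symmetric 4×4 matrix indexed by {β₁, β₂, α₁, α₂} with L(β₁,β₂) = L(α₁,α₂) = 0 and L(β_j, α_k) ≠ 0 for all j, k ∈ {1,2} (so the associated graph is the 4-cycle β₁–α₁–β₂–α₂–β₁). Let u : [0,1] → ℂ⁴ be a C¹ solution of ∂ₜu(t,·) = i·L u(t,·) with u(t,β₁) = u(t,β₂) = 0 for all t ∈ [0,1]. If L(α₁,α₁) ≠ L(α₂,α₂), then u(t,α) = 0 for all α and all t ∈ [0,1]. -/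
/-- the 4-cycle example.  Indices `0,1,2,3` of `Fin 4` stand for
`β₁, β₂, α₁, α₂` respectively.  If a solution of `∂ₜu = i·L u` vanishes at `β₁, β₂`
for all `t ∈ [0,1]` and `L(α₁,α₁) ≠ L(α₂,α₂)`, then the solution is identically 0. -/
theorem stmt_8 (L : Matrix (Fin 4) (Fin 4) ℝ) (hsym : L.IsSymm)
    (hββ : L 0 1 = 0) (hαα : L 2 3 = 0)
    (hβα : ∀ j ∈ ({0, 1} : Set (Fin 4)), ∀ k ∈ ({2, 3} : Set (Fin 4)), L j k ≠ 0)
    (u : ℝ → Fin 4 → ℂ)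
    (hode : ∀ α, ∀ t ∈ Set.Icc (0:ℝ) 1,
      HasDerivWithinAt (fun s => u s α) (Complex.I * ∑ η, (L α η : ℂ) * u t η)
        (Set.Icc (0:ℝ) 1) t)
    (hβ₁ : ∀ t ∈ Set.Icc (0:ℝ) 1, u t 0 = 0)
    (hβ₂ : ∀ t ∈ Set.Icc (0:ℝ) 1, u t 1 = 0)
    (hdiag : L 2 2 ≠ L 3 3) :
    ∀ α, ∀ t ∈ Set.Icc (0:ℝ) 1, u t α = 0 := by
  have hud : UniqueDiffOn ℝ (Set.Icc (0:ℝ) 1) := uniqueDiffOn_Icc (by norm_num)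
  have ha : L 0 2 ≠ 0 := hβα 0 (by simp) 2 (by simp)
  have hb : L 0 3 ≠ 0 := hβα 0 (by simp) 3 (by simp)
  have haC : (L 0 2 : ℂ) ≠ 0 := by exact_mod_cast ha
  have hbC : (L 0 3 : ℂ) ≠ 0 := by exact_mod_cast hb
  -- first relation: L02 u2 + L03 u3 = 0 on [0,1]
  have hrel : ∀ t ∈ Set.Icc (0:ℝ) 1,
      (L 0 2 : ℂ) * u t 2 + (L 0 3 : ℂ) * u t 3 = 0 := by
    intro t ht
    have h1 := hode 0 t ht
    have h2 : HasDerivWithinAt (fun s => u s 0) 0 (Set.Icc (0:ℝ) 1) t := by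
      have := (hasDerivWithinAt_const t (Set.Icc (0:ℝ) 1) (0:ℂ))
      exact this.congr (fun s hs => hβ₁ s hs) (hβ₁ t ht)
    have heq : Complex.I * ∑ η, (L 0 η : ℂ) * u t η = 0 := by
      have e1 := h1.derivWithin (hud t ht)
      have e2 := h2.derivWithin (hud t ht)
      rw [e1] at e2; exact e2
    have hsum : (∑ η, (L 0 η : ℂ) * u t η) = 0 := by
      rcases mul_eq_zero.mp heq with h | h
      · exact absurd h Complex.I_ne_zero
      · exact h
    rw [Fin.sum_univ_four, hβ₁ t ht, hβ₂ t ht] at hsum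
    push_cast [hββ] at hsum
    linear_combination hsum
  -- second relation, from differentiating the first
  have hrel2 : ∀ t ∈ Set.Icc (0:ℝ) 1,
      (L 0 2 : ℂ) * (L 2 2 : ℂ) * u t 2 + (L 0 3 : ℂ) * (L 3 3 : ℂ) * u t 3 = 0 := by
    intro t ht
    have hd2 : HasDerivWithinAt (fun s => u s 2)
        (Complex.I * ((L 2 2 : ℂ) * u t 2)) (Set.Icc (0:ℝ) 1) t := by
      have h := hode 2 t ht
      have : Complex.I * ∑ η, (L 2 η : ℂ) * u t η
          = Complex.I * ((L 2 2 : ℂ) * u t 2) := by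
        rw [Fin.sum_univ_four, hβ₁ t ht, hβ₂ t ht]
        push_cast [hαα]; ring
      rwa [this] at h
    have hd3 : HasDerivWithinAt (fun s => u s 3)
        (Complex.I * ((L 3 3 : ℂ) * u t 3)) (Set.Icc (0:ℝ) 1) t := by
      have h := hode 3 t ht
      have h32 : L 3 2 = 0 := by
        have := hsym.apply 2 3; rw [hαα] at this; exact this
      have : Complex.I * ∑ η, (L 3 η : ℂ) * u t η
          = Complex.I * ((L 3 3 : ℂ) * u t 3) := by
        rw [Fin.sum_univ_four, hβ₁ t ht, hβ₂ t ht]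
        push_cast [h32]; ring
      rwa [this] at h
    have hdf : HasDerivWithinAt
        (fun s => (L 0 2 : ℂ) * u s 2 + (L 0 3 : ℂ) * u s 3)
        ((L 0 2 : ℂ) * (Complex.I * ((L 2 2 : ℂ) * u t 2))
          + (L 0 3 : ℂ) * (Complex.I * ((L 3 3 : ℂ) * u t 3)))
        (Set.Icc (0:ℝ) 1) t := (hd2.const_mul _).add (hd3.const_mul _)
    have hzero : HasDerivWithinAt
        (fun s => (L 0 2 : ℂ) * u s 2 + (L 0 3 : ℂ) * u s 3) 0
        (Set.Icc (0:ℝ) 1) t := by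
      have := (hasDerivWithinAt_const t (Set.Icc (0:ℝ) 1) (0:ℂ))
      exact this.congr (fun s hs => (hrel s hs).symm ▸ rfl) ((hrel t ht).symm ▸ rfl)
    have heq : (L 0 2 : ℂ) * (Complex.I * ((L 2 2 : ℂ) * u t 2))
        + (L 0 3 : ℂ) * (Complex.I * ((L 3 3 : ℂ) * u t 3)) = 0 := by
      have e1 := hdf.derivWithin (hud t ht)
      have e2 := hzero.derivWithin (hud t ht)
      rw [e1] at e2; exact e2
    have heq' : Complex.I * ((L 0 2 : ℂ) * (L 2 2 : ℂ) * u t 2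
        + (L 0 3 : ℂ) * (L 3 3 : ℂ) * u t 3) = 0 := by linear_combination heq
    rcases mul_eq_zero.mp heq' with h | h
    · exact absurd h Complex.I_ne_zero
    · exact h
  -- conclude u3 = 0 then u2 = 0
  have hu3 : ∀ t ∈ Set.Icc (0:ℝ) 1, u t 3 = 0 := by
    intro t ht
    have h1 := hrel t ht
    have h2 := hrel2 t ht
    have key : (L 0 3 : ℂ) * ((L 3 3 : ℂ) - (L 2 2 : ℂ)) * u t 3 = 0 := by
      linear_combination h2 - (L 2 2 : ℂ) * h1
    have hne : (L 0 3 : ℂ) * ((L 3 3 : ℂ) - (L 2 2 : ℂ)) ≠ 0 := by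
      apply mul_ne_zero hbC
      rw [sub_ne_zero]
      exact fun h => hdiag (by exact_mod_cast h.symm)
    exact (mul_eq_zero.mp key).resolve_left hne
  have hu2 : ∀ t ∈ Set.Icc (0:ℝ) 1, u t 2 = 0 := by
    intro t ht
    have h1 := hrel t ht
    rw [hu3 t ht, mul_zero, add_zero] at h1
    exact (mul_eq_zero.mp h1).resolve_left haC
  intro α
  fin_cases α
  · exact hβ₁
  · exact hβ₂
  · exact hu2
  · exact hu3
end

section
/- Let L be a real symmetric 4×4 matrix indexed by {β₁, β₂, α₁, α₂} with L(β₁,β₂) = L(α₁,α₂) = 0 and L(β_j, α_k) ≠ 0 for all j, k ∈ {1,2} (so the associated graph is the 4-cycle β₁–α₁–β₂–α₂–β₁). Suppose L(α₁,α₁) = L(α₂,α₂). Then the complex vector space of C¹ solutions u : [0,1] → ℂ⁴ of ∂ₜu(t,·) = i·L u(t,·) satisfying u(t,β₁) = u(t,β₂) = 0 for all t ∈ [0,1] has dimension 2 − rank((L(β_j, α_k))_{j,k=1,2}). -/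
/-!
On a solution, `u(·, β) ≡ 0` for `β ∈ B = {β₁, β₂}` forces `∑_η L(β, η) u(t, η) = 0`, so every
`u(t)` lies in the space of vectors `v` vanishing on `B` with `(L v)(β) = 0` for `β ∈ B`. Since the
`α`-block of `L` is `d • 1` with `d = L(α₁, α₁)`, the matrix `L` acts on that space as the scalar `d`;
hence every solution is `u(t) = e^{idt} u(0)`, and every such `v` is the initial value of one. So
`u ↦ u(0)` is an isomorphism onto that space, which for the 4-cycle is the kernel of
`(L(β_j, α_k))` acting on `ℂ²`; rank–nullity, with the rank unchanged under `ℝ ⊆ ℂ`, gives the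
dimension.
-/

open Set

/-- The complex vector space of C¹ solutions of `∂ₜu(t,α) = i·Σ_η L(α,η)u(t,η)` on
`[0,1]` that vanish on `B` for all `t ∈ [0,1]`.  A solution on `[0,1]` is encoded as a
function on `ℝ` satisfying the equation on `[0,1]` (in the sense of one-sided
derivatives at the endpoints) and frozen outside `[0,1]`, so that this space is in
canonical linear bijection with the space of C¹ solutions on `[0,1]`. -/
noncomputable def solSpace {ι : Type*} [Fintype ι] (L : ι → ι → ℝ) (B : Set ι) :
    Submodule ℂ (ℝ → ι → ℂ) where
  carrier := {u |
    (∀ α, ∀ t ∈ Icc (0:ℝ) 1,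
      HasDerivWithinAt (fun s => u s α) (Complex.I * ∑ η, (L α η : ℂ) * u t η)
        (Icc (0:ℝ) 1) t) ∧
    (∀ t ≤ (0:ℝ), u t = u 0) ∧ (∀ t, (1:ℝ) ≤ t → u t = u 1) ∧
    (∀ β ∈ B, ∀ t ∈ Icc (0:ℝ) 1, u t β = 0)}
  zero_mem' := by
    refine ⟨fun α t ht => ?_, fun t _ => rfl, fun t _ => rfl, fun β _ t _ => rfl⟩
    simpa using (hasDerivWithinAt_const t (Icc (0:ℝ) 1) (0:ℂ))
  add_mem' := by
    rintro u v ⟨hu1, hu2, hu3, hu4⟩ ⟨hv1, hv2, hv3, hv4⟩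
    refine ⟨fun α t ht => ?_, fun t ht => ?_, fun t ht => ?_, fun β hβ t ht => ?_⟩
    · have h := (hu1 α t ht).add (hv1 α t ht)
      have : Complex.I * ∑ η, (L α η : ℂ) * u t η + Complex.I * ∑ η, (L α η : ℂ) * v t η
          = Complex.I * ∑ η, (L α η : ℂ) * (u + v) t η := by
        simp [Pi.add_apply, mul_add, Finset.sum_add_distrib]
      rw [← this]
      exact h
    · simp [Pi.add_apply, hu2 t ht, hv2 t ht]
    · simp [Pi.add_apply, hu3 t ht, hv3 t ht]
    · simp [Pi.add_apply, hu4 β hβ t ht, hv4 β hβ t ht]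
  smul_mem' := by
    rintro c u ⟨hu1, hu2, hu3, hu4⟩
    refine ⟨fun α t ht => ?_, fun t ht => ?_, fun t ht => ?_, fun β hβ t ht => ?_⟩
    · have h := (hu1 α t ht).const_mul c
      have : c * (Complex.I * ∑ η, (L α η : ℂ) * u t η)
          = Complex.I * ∑ η, (L α η : ℂ) * (c • u) t η := by
        simp only [Pi.smul_apply, smul_eq_mul, Finset.mul_sum]
        exact Finset.sum_congr rfl fun η _ => by ring
      rw [← this]
      exact h
    · simp [Pi.smul_apply, hu2 t ht]
    · simp [Pi.smul_apply, hu3 t ht]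
    · simp [Pi.smul_apply, hu4 β hβ t ht]

namespace Matrix

theorem rank_fromBlocks_one_zero {F : Type*} [Field F] (r k : ℕ) :
    (fromBlocks (1 : Matrix (Fin r) (Fin r) F) 0 0 (0 : Matrix (Fin k) (Fin k) F)).rank = r := by
  classical
  rw [← diagonal_one, ← diagonal_zero, fromBlocks_diagonal, rank_diagonal, Fintype.card_subtype,
    Finset.card_filter, Fintype.sum_sum_type]
  simp

theorem rank_map_of_field {K F : Type*} [Field K] [Field F] (f : K →+* F)
    {m : Type*} [Fintype m] [DecidableEq m] (A : Matrix m m K) :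
    (A.map f).rank = A.rank := by
  obtain ⟨V, U, e, hV, hU, hA⟩ := A.exists_rank_normal_form
  have hAf : V.map f * A.map f * U.map f = (fromBlocks 1 0 0 0).submatrix e e := by
    rw [← Matrix.map_mul, ← Matrix.map_mul, hA, ← submatrix_map, fromBlocks_map]
    simp
  rw [← rank_mul_eq_right_of_isUnit_det (V.map f), ← rank_mul_eq_left_of_isUnit_det (U.map f),
    hAf, rank_submatrix, rank_fromBlocks_one_zero]
  · exact (isUnit_iff_isUnit_det _).1 (hU.map (RingHom.mapMatrix f))
  · exact (isUnit_iff_isUnit_det _).1 (hV.map (RingHom.mapMatrix f))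

theorem rank_add_finrank_ker_mulVecLin {K : Type*} [Field K] {m n : Type*} [Fintype n]
    (A : Matrix m n K) : A.rank + Module.finrank K (LinearMap.ker A.mulVecLin) = Fintype.card n := by
  rw [Matrix.rank, LinearMap.finrank_range_add_finrank_ker, Module.finrank_fintype_fun_eq_card]

end Matrix

theorem eq_exp_mul_sub_of_hasDerivWithinAt {f : ℝ → ℂ} {c : ℂ} {a b : ℝ}
    (hf : ∀ t ∈ Icc a b, HasDerivWithinAt f (c * f t) (Icc a b) t) :
    ∀ t ∈ Icc a b, f t = Complex.exp (c * (t - a)) * f a := by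
  set g : ℝ → ℂ := fun s => Complex.exp (-c * s) * f s
  have hg : ∀ t ∈ Icc a b, HasDerivWithinAt g 0 (Icc a b) t := fun t ht => by
    have hexp : HasDerivAt (fun s : ℝ => Complex.exp (-c * s)) (-c * Complex.exp (-c * t)) t := by
      simpa [mul_comm] using ((hasDerivAt_id t).ofReal_comp.const_mul (-c)).cexp
    exact (hexp.hasDerivWithinAt.mul (hf t ht)).congr_deriv (by ring)
  have hconst := constant_of_has_deriv_right_zero (fun t ht => (hg t ht).continuousWithinAt)
    fun t ht => (hg t (Ico_subset_Icc_self ht)).mono_of_mem_nhdsWithin (Icc_mem_nhdsGE_of_mem ht)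
  intro t ht
  have h := hconst t ht
  simp only [g] at h
  calc f t = Complex.exp (c * t) * (Complex.exp (-c * t) * f t) := by
        rw [← mul_assoc, ← Complex.exp_add]; ring_nf; simp
    _ = Complex.exp (c * (t - a)) * f a := by
        rw [h, ← mul_assoc, ← Complex.exp_add]; ring_nf

section

variable {ι : Type*} [Fintype ι]

def initialDataSpace (L : ι → ι → ℝ) (B : Set ι) : Submodule ℂ (ι → ℂ) where
  carrier := {v | ∀ β ∈ B, v β = 0 ∧ ∑ η, (L β η : ℂ) * v η = 0}
  zero_mem' β _ := by simp
  add_mem' {v w} hv hw β hβ := by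
    simp [(hv β hβ).1, (hw β hβ).1, mul_add, Finset.sum_add_distrib, (hv β hβ).2, (hw β hβ).2]
  smul_mem' c v hv β hβ := by
    simp [(hv β hβ).1, mul_left_comm _ c, ← Finset.mul_sum, (hv β hβ).2]

namespace initialDataSpace

variable {L : ι → ι → ℝ} {B : Set ι} {d : ℝ} {v : ι → ℂ}

theorem sum_mul_eq (hdiag : ∀ α ∉ B, L α α = d) (hoff : ∀ α ∉ B, ∀ η ∉ B, α ≠ η → L α η = 0)
    (hv : v ∈ initialDataSpace L B) (α : ι) : ∑ η, (L α η : ℂ) * v η = d * v α := by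
  by_cases hα : α ∈ B
  · rw [(hv α hα).2, (hv α hα).1, mul_zero]
  rw [Finset.sum_eq_single α (fun η _ hη => ?_) (by simp), hdiag α hα]
  by_cases hηB : η ∈ B
  · rw [(hv η hηB).1, mul_zero]
  · rw [hoff α hα η hηB (Ne.symm hη), Complex.ofReal_zero, zero_mul]

end initialDataSpace

noncomputable def expSolution (d : ℝ) (v : ι → ℂ) : ℝ → ι → ℂ :=
  fun t => Complex.exp (Complex.I * d * projIcc (0 : ℝ) 1 zero_le_one t) • v

namespace solSpace

variable {L : ι → ι → ℝ} {B : Set ι} {d : ℝ} {u : ℝ → ι → ℂ}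

theorem apply_projIcc (hu : u ∈ solSpace L B) (t : ℝ) : u (projIcc 0 1 zero_le_one t) = u t := by
  have h := IccExtend_eq_self zero_le_one u (fun s hs => hu.2.1 s hs.le)
    (fun s hs => hu.2.2.1 s hs.le)
  exact congrFun h t

theorem apply_mem_initialDataSpace (hu : u ∈ solSpace L B) {t : ℝ} (ht : t ∈ Icc (0 : ℝ) 1) :
    u t ∈ initialDataSpace L B := by
  refine fun β hβ => ⟨hu.2.2.2 β hβ t ht, ?_⟩
  have hzero : HasDerivWithinAt (fun s => u s β) 0 (Icc 0 1) t :=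
    (hasDerivWithinAt_const t _ 0).congr (fun s hs => hu.2.2.2 β hβ s hs) (hu.2.2.2 β hβ t ht)
  have h := (uniqueDiffOn_Icc zero_lt_one t ht).eq_deriv _ (hu.1 β t ht) hzero
  exact (mul_eq_zero.1 h).resolve_left Complex.I_ne_zero

theorem apply_eq_exp_smul (hdiag : ∀ α ∉ B, L α α = d)
    (hoff : ∀ α ∉ B, ∀ η ∉ B, α ≠ η → L α η = 0) (hu : u ∈ solSpace L B) {t : ℝ}
    (ht : t ∈ Icc (0 : ℝ) 1) : u t = Complex.exp (Complex.I * d * t) • u 0 := by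
  have hode : ∀ α, ∀ s ∈ Icc (0 : ℝ) 1,
      HasDerivWithinAt (fun s => u s α) (Complex.I * d * u s α) (Icc 0 1) s := fun α s hs => by
    rw [mul_assoc, ← initialDataSpace.sum_mul_eq hdiag hoff (apply_mem_initialDataSpace hu hs)]
    exact hu.1 α s hs
  funext α
  simpa using eq_exp_mul_sub_of_hasDerivWithinAt (hode α) t ht

theorem eq_expSolution (hdiag : ∀ α ∉ B, L α α = d)
    (hoff : ∀ α ∉ B, ∀ η ∉ B, α ≠ η → L α η = 0) (hu : u ∈ solSpace L B) :
    u = expSolution d (u 0) := by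
  funext t
  rw [← apply_projIcc hu t, apply_eq_exp_smul hdiag hoff hu (projIcc 0 1 _ t).2]
  rfl

theorem expSolution_mem (hdiag : ∀ α ∉ B, L α α = d)
    (hoff : ∀ α ∉ B, ∀ η ∉ B, α ≠ η → L α η = 0) {v : ι → ℂ} (hv : v ∈ initialDataSpace L B) :
    expSolution d v ∈ solSpace L B := by
  refine ⟨fun α t ht => ?_, fun t ht => ?_, fun t ht => ?_, fun β hβ t _ => ?_⟩
  · have hexp : HasDerivAt (fun s : ℝ => Complex.exp (Complex.I * d * s) * v α)
        (Complex.I * d * Complex.exp (Complex.I * d * t) * v α) t := by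
      simpa [mul_comm] using
        (((hasDerivAt_id t).ofReal_comp.const_mul (Complex.I * d)).cexp).mul_const (v α)
    refine (hexp.hasDerivWithinAt.congr (fun s hs => ?_) ?_).congr_deriv ?_
    · simp [expSolution, projIcc_of_mem _ hs]
    · simp [expSolution, projIcc_of_mem _ ht]
    · simp only [expSolution, Pi.smul_apply, smul_eq_mul, projIcc_of_mem _ ht, mul_left_comm _
        (Complex.exp _), ← Finset.mul_sum, initialDataSpace.sum_mul_eq hdiag hoff hv]
      ring
  · simp [expSolution, projIcc_of_le_left _ ht]
  · simp [expSolution, projIcc_of_right_le _ ht]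
  · simp [expSolution, (hv β hβ).1]

noncomputable def equivInitialDataSpace (hdiag : ∀ α ∉ B, L α α = d)
    (hoff : ∀ α ∉ B, ∀ η ∉ B, α ≠ η → L α η = 0) :
    solSpace L B ≃ₗ[ℂ] initialDataSpace L B where
  toFun u := ⟨u.1 0, apply_mem_initialDataSpace u.2 (left_mem_Icc.2 zero_le_one)⟩
  invFun v := ⟨expSolution d v, expSolution_mem hdiag hoff v.2⟩
  map_add' _ _ := rfl
  map_smul' _ _ := rfl
  left_inv u := Subtype.ext (eq_expSolution hdiag hoff u.2).symm
  right_inv v := Subtype.ext (by simp [expSolution])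

end solSpace

end

noncomputable def initialDataSpaceEquivKer (L : Matrix (Fin 4) (Fin 4) ℝ) :
    initialDataSpace (fun a b => L a b) ({0, 1} : Set (Fin 4)) ≃ₗ[ℂ]
      LinearMap.ker ((!![L 0 2, L 0 3; L 1 2, L 1 3] : Matrix (Fin 2) (Fin 2) ℝ).map
        Complex.ofRealHom).mulVecLin where
  toFun v := ⟨![v.1 2, v.1 3], by
    obtain ⟨h0, hL0⟩ := v.2 0 (by simp)
    obtain ⟨h1, hL1⟩ := v.2 1 (by simp)
    simp only [Fin.sum_univ_four, h0, h1, mul_zero, zero_add] at hL0 hL1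
    ext i; fin_cases i <;> simp [Matrix.mulVec, dotProduct, hL0, hL1]⟩
  invFun w := ⟨![0, 0, w.1 0, w.1 1], by
    have hw := LinearMap.mem_ker.1 w.2
    rw [Matrix.mulVecLin_apply] at hw
    have h0 := congrFun hw 0
    have h1 := congrFun hw 1
    simp [Matrix.mulVec, dotProduct] at h0 h1
    rintro β (rfl | rfl) <;> simp [Fin.sum_univ_four, h0, h1]⟩
  map_add' _ _ := by ext i; fin_cases i <;> rfl
  map_smul' _ _ := by ext i; fin_cases i <;> rfl
  left_inv v := by
    ext i; fin_cases i
    · exact (v.2 0 (by simp)).1.symm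
    · exact (v.2 1 (by simp)).1.symm
    · rfl
    · rfl
  right_inv w := by ext i; fin_cases i <;> rfl

/-- Indices `0,1,2,3` of `Fin 4` stand for `β₁, β₂, α₁, α₂`. -/
theorem stmt_9_general (L : Matrix (Fin 4) (Fin 4) ℝ) (hsym : L.IsSymm)
    (hαα : L 2 3 = 0)
    (hdiag : L 2 2 = L 3 3) :
    Module.finrank ℂ (solSpace (fun a b => L a b) ({0, 1} : Set (Fin 4)))
      = 2 - (!![L 0 2, L 0 3; L 1 2, L 1 3] : Matrix (Fin 2) (Fin 2) ℝ).rank := by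
  have hdiagα : ∀ α ∉ ({0, 1} : Set (Fin 4)), L α α = L 2 2 := by
    intro α hα
    fin_cases α <;> simp_all
  have hoffα : ∀ α ∉ ({0, 1} : Set (Fin 4)), ∀ η ∉ ({0, 1} : Set (Fin 4)), α ≠ η → L α η = 0 := by
    intro α hα η hη hne
    fin_cases α <;> fin_cases η <;> simp_all [hsym.apply 2 3]
  have hrank := ((!![L 0 2, L 0 3; L 1 2, L 1 3] : Matrix (Fin 2) (Fin 2) ℝ).map
    Complex.ofRealHom).rank_add_finrank_ker_mulVecLin
  rw [Matrix.rank_map_of_field, Fintype.card_fin] at hrank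
  rw [(solSpace.equivInitialDataSpace hdiagα hoffα).finrank_eq,
    (initialDataSpaceEquivKer L).finrank_eq]
  omega

/-- the 4-cycle example with `L(α₁,α₁) = L(α₂,α₂)`.  Indices `0,1,2,3`
of `Fin 4` stand for `β₁, β₂, α₁, α₂`.  The space of C¹ solutions of `∂ₜu = i·L u`
vanishing at `β₁, β₂` for `t ∈ [0,1]` has dimension `2 − rank (L(β_j,α_k))_{j,k}`. -/
theorem stmt_9 (L : Matrix (Fin 4) (Fin 4) ℝ) (hsym : L.IsSymm)
    (hββ : L 0 1 = 0) (hαα : L 2 3 = 0)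
    (hβα : ∀ j ∈ ({0, 1} : Set (Fin 4)), ∀ k ∈ ({2, 3} : Set (Fin 4)), L j k ≠ 0)
    (hdiag : L 2 2 = L 3 3) :
    Module.finrank ℂ (solSpace (fun a b => L a b) ({0, 1} : Set (Fin 4)))
      = 2 - (!![L 0 2, L 0 3; L 1 2, L 1 3] : Matrix (Fin 2) (Fin 2) ℝ).rank :=
  stmt_9_general L hsym hαα hdiag
end

section
/- Let a, b : ℕ → ℝ with b(k) ≠ 0 for all k ≥ 1, and let u : [0,1] × ℕ → ℂ be such that t ↦ u(t,k) is differentiable for each k and ∂ₜu(t,k) = i·(−b(k−1)u(t,k−1) + a(k)u(t,k) − b(k)u(t,k+1)) for all k ≥ 1 and t ∈ [0,1]. If u(t,0) = u(t,1) = 0 for all t ∈ [0,1], then u(t,k) = 0 for all k ≥ 0 and all t ∈ [0,1]. -/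
/-- propagation of zeros along a single channel.  If a solution of the
discrete Schrödinger evolution associated to a Jacobi-type difference operator on ℕ
(with nonvanishing off-diagonal entries `b(k) ≠ 0` for `k ≥ 1`) vanishes at the two
vertices `k = 0` and `k = 1` for all `t ∈ [0,1]`, then it vanishes identically. -/
theorem stmt_10 (a b : ℕ → ℝ) (hb : ∀ k : ℕ, 1 ≤ k → b k ≠ 0)
    (u : ℝ → ℕ → ℂ)
    (hdiff : ∀ k : ℕ, ∀ t ∈ Set.Icc (0:ℝ) 1,
      DifferentiableWithinAt ℝ (fun s => u s k) (Set.Icc (0:ℝ) 1) t)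
    (hode : ∀ k : ℕ, ∀ t ∈ Set.Icc (0:ℝ) 1,
      HasDerivWithinAt (fun s => u s (k + 1))
        (Complex.I * (-(b k : ℂ) * u t k + (a (k + 1) : ℂ) * u t (k + 1)
          - (b (k + 1) : ℂ) * u t (k + 2)))
        (Set.Icc (0:ℝ) 1) t)
    (h0 : ∀ t ∈ Set.Icc (0:ℝ) 1, u t 0 = 0)
    (h1 : ∀ t ∈ Set.Icc (0:ℝ) 1, u t 1 = 0) :
    ∀ k : ℕ, ∀ t ∈ Set.Icc (0:ℝ) 1, u t k = 0 := by
  have key : ∀ k : ℕ, (∀ t ∈ Set.Icc (0:ℝ) 1, u t k = 0) ∧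
      (∀ t ∈ Set.Icc (0:ℝ) 1, u t (k+1) = 0) := by
    intro k
    induction k with
    | zero => exact ⟨h0, h1⟩
    | succ n ih =>
      refine ⟨ih.2, fun t ht => ?_⟩
      have hzero : HasDerivWithinAt (fun s => u s (n + 1)) 0 (Set.Icc (0:ℝ) 1) t := by
        have : HasDerivWithinAt (fun _ : ℝ => (0:ℂ)) 0 (Set.Icc (0:ℝ) 1) t :=
          hasDerivWithinAt_const t _ 0
        exact this.congr (fun s hs => ih.2 s hs) (ih.2 t ht)
      have hud : UniqueDiffWithinAt ℝ (Set.Icc (0:ℝ) 1) t :=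
        uniqueDiffOn_Icc (by norm_num) t ht
      have heq := (hode n t ht).derivWithin hud
      rw [hzero.derivWithin hud] at heq
      rw [ih.1 t ht, ih.2 t ht] at heq
      have : (b (n+1) : ℂ) * u t (n + 2) = 0 := by
        have hI : (Complex.I) ≠ 0 := Complex.I_ne_zero
        have := heq.symm
        field_simp at this
        simpa using this
      rcases mul_eq_zero.1 this with h | h
      · exact absurd (Complex.ofReal_eq_zero.1 h) (hb (n+1) (by omega))
      · exact h
  intro k
  exact (key k).1
end

section
/- Let f be an entire function, not identically zero, of exponential type, i.e., |f(z)| ≤ C·e^{k|z|} for some constants C, k > 0 and all z ∈ ℂ. Define the indicator function h_f(φ) = limsup_{r→∞} (log|f(re^{iφ})|)/r. Then h_f(φ) + h_f(φ + π) ≥ 0 for every φ ∈ ℝ. -/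
/-!
Suppose `h(φ) + h(φ + π) < 0`. After rotating `φ` to `0`, the even entire function
`g(z) = f(z) f(-z)` is of exponential type and decays like `e^{-ε|x|}` on the real axis.
Phragmén–Lindelöf, first in the quadrants bounded by the real and imaginary axes and then in the
quadrant bisected by the imaginary axis, turns a bound `e^{c|y|}` for `g` on the imaginary axis
into `e^{(c - ε)|y|}`. Iterating, `g` vanishes on the imaginary axis, hence `g = 0`, and since the
germs of entire functions form a domain, `f = 0`.
-/

open Filter Complex Topology Set

lemma norm_comp_mul_le_exp {F : ℂ → ℂ} {A K : ℝ} (hbd : ∀ z, ‖F z‖ ≤ A * Real.exp (K * ‖z‖))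
    (u z : ℂ) :
    ‖F (z * u)‖ ≤ A * Real.exp (K * ‖u‖ * ‖z‖) := by
  simpa only [norm_mul, mul_comm ‖z‖, mul_assoc] using hbd (z * u)

namespace PhragmenLindelof

variable {F g : ℂ → ℂ} {A K M a b c ε : ℝ}

theorem quadrant_I_exp_bound (hF : Differentiable ℂ F) (hbd : ∀ z, ‖F z‖ ≤ A * Real.exp (K * ‖z‖))
    (hre : ∀ x : ℝ, 0 ≤ x → ‖F x‖ ≤ M * Real.exp (a * x))
    (him : ∀ y : ℝ, 0 ≤ y → ‖F (y * I)‖ ≤ M * Real.exp (b * y))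
    {z : ℂ} (hz_re : 0 ≤ z.re) (hz_im : 0 ≤ z.im) :
    ‖F z‖ ≤ M * Real.exp (a * z.re + b * z.im) := by
  -- `‖exp (ζ * w)‖ = exp (-(a * w.re + b * w.im))`, so `G` is bounded by `M` on both boundary rays
  set ζ : ℂ := -a + b * I
  set G : ℂ → ℂ := fun w => F w * exp (ζ * w)
  have hG : ∀ w, ‖G w‖ = ‖F w‖ * Real.exp (-(a * w.re + b * w.im)) := fun w => by
    simp only [G, ζ, norm_mul, norm_exp, mul_re, add_re, add_im, neg_re, neg_im, ofReal_re,
      ofReal_im, mul_im, I_re, I_im]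
    ring_nf
  have hGz : ‖G z‖ ≤ M := by
    refine quadrant_I ((hF.mul (differentiable_id.const_mul ζ).cexp).diffContOnCl)
      ⟨1, one_lt_two, K + ‖ζ‖, ?_⟩ (fun x hx => ?_) (fun y hy => ?_) hz_re hz_im
    · refine (Asymptotics.isBigO_of_le' (c := A) _ fun w => ?_).mono inf_le_left
      have hζw : -(a * w.re + b * w.im) ≤ ‖ζ‖ * ‖w‖ := by
        calc -(a * w.re + b * w.im) = (ζ * w).re := by simp [ζ]; ring
          _ ≤ ‖ζ * w‖ := re_le_norm _
          _ = ‖ζ‖ * ‖w‖ := norm_mul _ _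
      rw [hG, Real.norm_eq_abs, abs_of_pos (Real.exp_pos _), Real.rpow_one, add_mul,
        Real.exp_add, ← mul_assoc]
      exact mul_le_mul (hbd w) (Real.exp_le_exp.2 hζw) (Real.exp_pos _).le
        ((norm_nonneg _).trans (hbd w))
    · simpa [hG, Real.exp_neg, ← div_eq_mul_inv, div_le_iff₀ (Real.exp_pos _)] using hre x hx
    · simpa [hG, Real.exp_neg, ← div_eq_mul_inv, div_le_iff₀ (Real.exp_pos _)] using him y hy
  rwa [hG, Real.exp_neg, ← div_eq_mul_inv, div_le_iff₀ (Real.exp_pos _)] at hGz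

/-- The quadrant bounds give `e^{(c - ε) t / √2}` on the rays through `(±1 + i) / √2`, and
Phragmén–Lindelöf in the quadrant between these rays transports it to the imaginary axis. -/
theorem norm_le_on_imaginary_axis_of_even (hg : Differentiable ℂ g) (heven : ∀ z, g (-z) = g z)
    (hbd : ∀ z, ‖g z‖ ≤ A * Real.exp (K * ‖z‖))
    (hre : ∀ x : ℝ, 0 ≤ x → ‖g x‖ ≤ M * Real.exp (-ε * x))
    (him : ∀ y : ℝ, 0 ≤ y → ‖g (y * I)‖ ≤ M * Real.exp (c * y)) (y : ℝ) (hy : 0 ≤ y) :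
    ‖g (y * I)‖ ≤ M * Real.exp ((c - ε) * y) := by
  set s : ℝ := √2 / 2
  have hs : s * s = 1 / 2 := by
    simp only [s]; ring_nf; norm_num
  set v : ℂ := s * (1 + I)
  have hvv : v * v = I := by
    simp only [v]; ring_nf; rw [I_sq, ← ofReal_pow, sq, hs]; push_cast; ring
  have hv_re (t : ℝ) : ((t : ℂ) * v).re = t * s := by simp [v]
  have hv_im (t : ℝ) : ((t : ℂ) * v).im = t * s := by simp [v]
  have hdiag (t : ℝ) (ht : 0 ≤ t) : ‖g (t * v)‖ ≤ M * Real.exp ((c - ε) * s * t) := by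
    have := quadrant_I_exp_bound hg hbd hre him (z := t * v) (by rw [hv_re]; positivity)
      (by rw [hv_im]; positivity)
    rwa [hv_re, hv_im, show -ε * (t * s) + c * (t * s) = (c - ε) * s * t by ring] at this
  have hdiag' (t : ℝ) (ht : 0 ≤ t) : ‖g (t * v * I)‖ ≤ M * Real.exp ((c - ε) * s * t) := by
    have := quadrant_I_exp_bound (F := fun w => g (w * I)) (a := c) (b := -ε)
      (hg.comp (differentiable_id.mul_const I)) (by simpa using norm_comp_mul_le_exp hbd I) him
      (fun x hx => by simpa [mul_assoc, heven] using hre x hx)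
      (z := t * v) (by rw [hv_re]; positivity) (by rw [hv_im]; positivity)
    rwa [hv_re, hv_im, show c * (t * s) + -ε * (t * s) = (c - ε) * s * t by ring] at this
  have := quadrant_I_exp_bound (F := fun w => g (w * v)) (a := (c - ε) * s) (b := (c - ε) * s)
    (hg.comp (differentiable_id.mul_const v)) (norm_comp_mul_le_exp hbd v) hdiag
    (fun t ht => by simpa only [mul_assoc, mul_comm I v] using hdiag' t ht)
    (z := y * v) (by rw [hv_re]; positivity) (by rw [hv_im]; positivity)
  rwa [hv_re, hv_im, mul_assoc, hvv,
    show (c - ε) * s * (y * s) + (c - ε) * s * (y * s) = (c - ε) * (2 * (s * s)) * y by ring,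
    hs, show (2 : ℝ) * (1 / 2) = 1 by norm_num, mul_one] at this

end PhragmenLindelof

section
variable {E : Type*} [NormedAddCommGroup E] {F : ℝ → E} {A K a : ℝ}

lemma exists_norm_le_mul_exp_of_eventually (hbd : ∀ x, 0 ≤ x → ‖F x‖ ≤ A * Real.exp (K * x))
    (hev : ∀ᶠ x in atTop, ‖F x‖ ≤ Real.exp (a * x)) :
    ∃ M, ∀ x, 0 ≤ x → ‖F x‖ ≤ M * Real.exp (a * x) := by
  obtain ⟨R, hR⟩ := eventually_atTop.1 hev
  refine ⟨max 1 (|A| * Real.exp (|K - a| * R)), fun x hx => ?_⟩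
  rcases le_total R x with hRx | hxR
  · exact (hR x hRx).trans (le_mul_of_one_le_left (Real.exp_pos _).le (le_max_left _ _))
  · calc ‖F x‖ ≤ A * Real.exp (K * x) := hbd x hx
      _ = A * Real.exp ((K - a) * x) * Real.exp (a * x) := by
        rw [mul_assoc, ← Real.exp_add]; ring_nf
      _ ≤ |A| * Real.exp (|K - a| * R) * Real.exp (a * x) := by
        have hKa : (K - a) * x ≤ |K - a| * R :=
          (mul_le_mul_of_nonneg_right (le_abs_self _) hx).trans
            (mul_le_mul_of_nonneg_left hxR (abs_nonneg _))
        gcongr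
        exact le_abs_self A
      _ ≤ _ := by gcongr; exact le_max_right _ _

lemma isBoundedUnder_log_norm_div (hbd : ∀ x, 0 ≤ x → ‖F x‖ ≤ A * Real.exp (K * x)) :
    IsBoundedUnder (· ≤ ·) atTop fun r => Real.log ‖F r‖ / r := by
  refine isBoundedUnder_of_eventually_le (a := |Real.log A| + |K|) ?_
  filter_upwards [eventually_ge_atTop 1] with r hr
  have hr0 : 0 < r := one_pos.trans_le hr
  rcases (norm_nonneg (F r)).eq_or_lt with h0 | hpos
  · rw [← h0, Real.log_zero, zero_div]; positivity
  have hA : 0 < A := pos_of_mul_pos_left (hpos.trans_le (hbd r hr0.le)) (Real.exp_pos _).le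
  have hlog : Real.log ‖F r‖ ≤ Real.log A + K * r := by
    simpa [Real.log_mul hA.ne' (Real.exp_ne_zero _)] using Real.log_le_log hpos (hbd r hr0.le)
  rw [div_le_iff₀ hr0]
  nlinarith [le_abs_self (Real.log A), abs_nonneg (Real.log A), le_abs_self K]

lemma eventually_norm_le_exp_of_limsup_lt (hbd : ∀ x, 0 ≤ x → ‖F x‖ ≤ A * Real.exp (K * x))
    (h : limsup (fun r => Real.log ‖F r‖ / r) atTop < a) :
    ∀ᶠ r in atTop, ‖F r‖ ≤ Real.exp (a * r) := by
  filter_upwards [eventually_lt_of_limsup_lt h (isBoundedUnder_log_norm_div hbd),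
    eventually_gt_atTop 0] with r hr hr0
  rcases (norm_nonneg (F r)).eq_or_lt with h0 | hpos
  · rw [← h0]; positivity
  · rw [← Real.exp_log hpos]
    exact Real.exp_le_exp.2 ((div_lt_iff₀ hr0).1 hr).le

end

lemma eq_zero_of_mul_comp_neg_eq_zero {f : ℂ → ℂ} (hf : Differentiable ℂ f)
    (h : ∀ z, f z * f (-z) = 0) : f = 0 := by
  have han := analyticOnNhd_univ_iff_differentiable.2 hf
  rcases han.eq_zero_or_eq_zero_of_mul_eq_zero (g := fun z => f (-z))
    (analyticOnNhd_univ_iff_differentiable.2 (hf.comp differentiable_neg))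
    (fun z _ => h z) isPreconnected_univ with h0 | h0
  · exact funext fun z => h0 z (mem_univ z)
  · exact funext fun z => by simpa using h0 (-z) (mem_univ _)

theorem eq_zero_of_even_of_norm_le_exp_neg {g : ℂ → ℂ} {A K M ε : ℝ} (hg : Differentiable ℂ g)
    (heven : ∀ z, g (-z) = g z) (hbd : ∀ z, ‖g z‖ ≤ A * Real.exp (K * ‖z‖)) (hε : 0 < ε)
    (hre : ∀ x : ℝ, 0 ≤ x → ‖g x‖ ≤ M * Real.exp (-ε * x)) : g = 0 := by
  set M' := max M A
  have him (n : ℕ) (y : ℝ) (hy : 0 ≤ y) : ‖g (y * I)‖ ≤ M' * Real.exp ((K - n * ε) * y) := by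
    induction n generalizing y with
    | zero =>
      simpa [M', abs_of_nonneg hy] using (hbd (y * I)).trans
        (mul_le_mul_of_nonneg_right (le_max_right M A) (Real.exp_pos _).le)
    | succ n ih =>
      have := PhragmenLindelof.norm_le_on_imaginary_axis_of_even hg heven hbd
        (fun x hx => (hre x hx).trans
          (mul_le_mul_of_nonneg_right (le_max_left M A) (Real.exp_pos _).le)) ih y hy
      rwa [show K - n * ε - ε = K - (n + 1 : ℕ) * ε by push_cast; ring] at this
  have haxis (y : ℝ) (hy : 0 < y) : g (y * I) = 0 := by
    have hlim : Tendsto (fun n : ℕ => M' * Real.exp ((K - n * ε) * y)) atTop (𝓝 0) := by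
      have : Tendsto (fun n : ℕ => (K - n * ε) * y) atTop atBot := by
        refine (tendsto_atBot_add_const_left _ (K * y) (tendsto_neg_atTop_atBot.comp
          (tendsto_natCast_atTop_atTop.atTop_mul_const (mul_pos hε hy)))).congr fun n => ?_
        simp only [Function.comp_apply]; ring
      simpa using (Real.tendsto_exp_atBot.comp this).const_mul M'
    exact norm_le_zero_iff.1 (ge_of_tendsto' hlim fun n => him n y hy.le)
  have hfreq : ∃ᶠ z in 𝓝[≠] I, g z = 0 := by
    have hmap : Tendsto (fun t : ℝ => (t : ℂ) * I) (𝓝[>] 1) (𝓝[≠] I) := by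
      refine tendsto_nhdsWithin_iff.2 ⟨?_, ?_⟩
      · have hc : Continuous fun t : ℝ => (t : ℂ) * I := by fun_prop
        simpa using (hc.tendsto 1).mono_left nhdsWithin_le_nhds
      · filter_upwards [self_mem_nhdsWithin] with t ht
        simpa [I_ne_zero] using ht.ne'
    exact hmap.frequently (Eventually.frequently (by
      filter_upwards [self_mem_nhdsWithin] with t ht using haxis t (one_pos.trans ht)))
  funext z
  exact (analyticOnNhd_univ_iff_differentiable.2 hg).eqOn_zero_of_preconnected_of_frequently_eq_zero
    isPreconnected_univ (mem_univ I) hfreq (mem_univ z)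

theorem limsup_log_norm_div_add_limsup_neg_nonneg {f : ℂ → ℂ} {A K : ℝ} (hf : Differentiable ℂ f)
    (hne : f ≠ 0) (hbd : ∀ z, ‖f z‖ ≤ A * Real.exp (K * ‖z‖)) :
    0 ≤ limsup (fun r : ℝ => Real.log ‖f r‖ / r) atTop
      + limsup (fun r : ℝ => Real.log ‖f (-r)‖ / r) atTop := by
  by_contra! hneg
  set L₁ := limsup (fun r : ℝ => Real.log ‖f r‖ / r) atTop
  set L₂ := limsup (fun r : ℝ => Real.log ‖f (-r)‖ / r) atTop
  obtain ⟨ε, hε, hsum⟩ : ∃ ε > 0, L₁ + L₂ = -3 * ε := ⟨-(L₁ + L₂) / 3, by linarith, by ring⟩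
  have hbd_pos (x : ℝ) (hx : 0 ≤ x) : ‖f x‖ ≤ A * Real.exp (K * x) := by
    simpa [abs_of_nonneg hx] using hbd x
  have hbd_neg (x : ℝ) (hx : 0 ≤ x) : ‖f (-x)‖ ≤ A * Real.exp (K * x) := by
    simpa [abs_of_nonneg hx] using hbd (-x)
  set g : ℂ → ℂ := fun z => f z * f (-z)
  have hg_bd (z : ℂ) : ‖g z‖ ≤ A * A * Real.exp (2 * K * ‖z‖) :=
    calc ‖g z‖ = ‖f z‖ * ‖f (-z)‖ := norm_mul _ _
      _ ≤ (A * Real.exp (K * ‖z‖)) * (A * Real.exp (K * ‖z‖)) := by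
        refine mul_le_mul (hbd z) ?_ (norm_nonneg _) ((norm_nonneg _).trans (hbd z))
        simpa using hbd (-z)
      _ = A * A * Real.exp (2 * K * ‖z‖) := by
        rw [mul_mul_mul_comm, ← Real.exp_add]; ring_nf
  have hg_decay : ∀ᶠ x : ℝ in atTop, ‖g x‖ ≤ Real.exp (-ε * x) := by
    filter_upwards [eventually_norm_le_exp_of_limsup_lt hbd_pos (a := L₁ + ε)
      (show L₁ < L₁ + ε by linarith),
      eventually_norm_le_exp_of_limsup_lt hbd_neg (a := L₂ + ε)
      (show L₂ < L₂ + ε by linarith)] with x h₁ h₂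
    calc ‖g x‖ = ‖f x‖ * ‖f (-x)‖ := norm_mul _ _
      _ ≤ Real.exp ((L₁ + ε) * x) * Real.exp ((L₂ + ε) * x) := by gcongr
      _ = Real.exp (-ε * x) := by rw [← Real.exp_add]; congr 1; linear_combination x * hsum
  obtain ⟨M, hM⟩ := exists_norm_le_mul_exp_of_eventually
    (fun x hx => by simpa [abs_of_nonneg hx] using hg_bd x) hg_decay
  have hg : g = 0 := eq_zero_of_even_of_norm_le_exp_neg (hf.mul (hf.comp differentiable_neg))
    (fun z => by simp [g, mul_comm]) hg_bd hε hM
  exact hne (eq_zero_of_mul_comp_neg_eq_zero hf (congrFun hg))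

/-- for an entire function `f ≢ 0` of exponential type, the indicator
function `h_f(φ) = limsup_{r→∞} log|f(re^{iφ})|/r` satisfies `h_f(φ) + h_f(φ+π) ≥ 0`. -/
theorem stmt_13 (f : ℂ → ℂ) (hf : Differentiable ℂ f) (hne : f ≠ 0)
    (htype : ∃ C > (0:ℝ), ∃ k > (0:ℝ), ∀ z : ℂ, ‖f z‖ ≤ C * Real.exp (k * ‖z‖))
    (φ : ℝ) :
    0 ≤ limsup (fun r : ℝ =>
          Real.log ‖f (r * Complex.exp (φ * Complex.I))‖ / r) atTop
      + limsup (fun r : ℝ =>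
          Real.log ‖f (r * Complex.exp ((φ + Real.pi) * Complex.I))‖ / r) atTop := by
  obtain ⟨C, -, k, -, hbd⟩ := htype
  set e := Complex.exp (φ * I)
  have he : e ≠ 0 := Complex.exp_ne_zero _
  have he_pi : Complex.exp ((φ + Real.pi) * I) = -e := by
    rw [add_mul, Complex.exp_add, exp_pi_mul_I, mul_neg_one]
  have hne' : (fun z => f (z * e)) ≠ 0 := fun h => hne <| funext fun z => by
    simpa [he] using congrFun h (z / e)
  simpa [he_pi] using limsup_log_norm_div_add_limsup_neg_nonneg
    (hf.comp (differentiable_id.mul_const e)) hne'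
    (norm_comp_mul_le_exp hbd e)
end

section
/- Let K : [α,β] → ℝ be continuous and trigonometrically convex on [α,β]. Then K(φ) + K(φ + π) ≥ 0 whenever α ≤ φ < φ + π ≤ β. -/
/-- a continuous trigonometrically convex function `K` on `[α,β]`
satisfies `K(φ) + K(φ+π) ≥ 0` whenever `α ≤ φ < φ + π ≤ β`. -/
theorem stmt_14 (α β : ℝ) (K : ℝ → ℝ)
    (hcont : ContinuousOn K (Set.Icc α β))
    (hconv : ∀ θ₁ θ₂ θ : ℝ, α ≤ θ₁ → θ₁ < θ₂ → θ₂ ≤ β → θ₂ - θ₁ < Real.pi →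
      θ ∈ Set.Icc θ₁ θ₂ →
      K θ * Real.sin (θ₂ - θ₁) ≤ K θ₁ * Real.sin (θ₂ - θ) + K θ₂ * Real.sin (θ - θ₁))
    (φ : ℝ) (hφα : α ≤ φ) (hφβ : φ + Real.pi ≤ β) :
    0 ≤ K φ + K (φ + Real.pi) := by
  have hπ := Real.pi_pos
  set m := φ + Real.pi / 2 with hm
  have hmlt : m < φ + Real.pi := by simp only [hm]; linarith
  have hφm : φ < m := by simp only [hm]; linarith
  set F : ℝ → ℝ := fun θ₂ =>
    K φ * Real.sin (θ₂ - m) + K θ₂ * Real.sin (m - φ) - K m * Real.sin (θ₂ - φ) with hF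
  have hFnn : ∀ θ₂ ∈ Set.Ioo m (φ + Real.pi), 0 ≤ F θ₂ := by
    intro θ₂ hθ₂
    obtain ⟨h1, h2⟩ := hθ₂
    have := hconv φ θ₂ m hφα (by linarith) (by linarith) (by linarith)
      ⟨by linarith, by linarith⟩
    simp only [hF]
    linarith
  have hmem : φ + Real.pi ∈ Set.Icc α β := ⟨by linarith, hφβ⟩
  have hsub : Set.Ioo m (φ + Real.pi) ⊆ Set.Icc α β := fun x hx =>
    ⟨by linarith [hx.1], by linarith [hx.2]⟩
  have hK : Filter.Tendsto K (nhdsWithin (φ + Real.pi) (Set.Ioo m (φ + Real.pi)))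
      (nhds (K (φ + Real.pi))) :=
    (hcont.continuousWithinAt hmem).mono hsub
  have hsin1 : Filter.Tendsto (fun θ₂ => Real.sin (θ₂ - m))
      (nhdsWithin (φ + Real.pi) (Set.Ioo m (φ + Real.pi)))
      (nhds (Real.sin (φ + Real.pi - m))) :=
    ((Real.continuous_sin.comp (continuous_id.sub continuous_const)).tendsto _).mono_left
      nhdsWithin_le_nhds
  have hsin2 : Filter.Tendsto (fun θ₂ => Real.sin (θ₂ - φ))
      (nhdsWithin (φ + Real.pi) (Set.Ioo m (φ + Real.pi)))
      (nhds (Real.sin (φ + Real.pi - φ))) :=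
    ((Real.continuous_sin.comp (continuous_id.sub continuous_const)).tendsto _).mono_left
      nhdsWithin_le_nhds
  have hFt : Filter.Tendsto F (nhdsWithin (φ + Real.pi) (Set.Ioo m (φ + Real.pi)))
      (nhds (K φ * Real.sin (φ + Real.pi - m) + K (φ + Real.pi) * Real.sin (m - φ)
        - K m * Real.sin (φ + Real.pi - φ))) := by
    exact ((Filter.Tendsto.const_mul _ hsin1).add (hK.mul tendsto_const_nhds)).sub
      (Filter.Tendsto.const_mul _ hsin2)
  have hval : K φ * Real.sin (φ + Real.pi - m) + K (φ + Real.pi) * Real.sin (m - φ)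
      - K m * Real.sin (φ + Real.pi - φ) = K φ + K (φ + Real.pi) := by
    have e1 : φ + Real.pi - m = Real.pi / 2 := by simp [hm]; ring
    have e2 : m - φ = Real.pi / 2 := by simp [hm]
    have e3 : φ + Real.pi - φ = Real.pi := by ring
    rw [e1, e2, e3, Real.sin_pi_div_two, Real.sin_pi]
    ring
  rw [hval] at hFt
  haveI : (nhdsWithin (φ + Real.pi) (Set.Ioo m (φ + Real.pi))).NeBot :=
    right_nhdsWithin_Ioo_neBot hmlt
  exact ge_of_tendsto hFt (eventually_nhdsWithin_of_forall hFnn)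
end
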